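/- arXiv:1211.4461 — 4 statements merged into one kernel-verified Lean document; each statement's English description precedes it below -/
import Mathlib

section
/- Let 0 < γ < π/2 and R > 0, and let f : ℂ → ℂ be complex differentiable on an open set containing the closed sector S(R,γ) = {r·e^{iθ} : 0 ≤ r ≤ R, 0 ≤ θ ≤ γ}. Then ∫₀^R f(t) dt = e^{iγ} · ∫₀^R f(t·e^{iγ}) dt − i·R·∫₀^γ e^{iθ} · f(R·e^{iθ}) dθ, i.e. the integral of f over the real segment [0,R] equals the integral over the rotated segment {t·e^{iγ} : t ∈ [0,R]} plus the (negatively oriented) contribution of the circular arc {R·e^{iθ} : θ ∈ [0,γ]}. -/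
/-!
Pulling back along `w ↦ exp w`, the annular sector `{r e^{iθ} : ε ≤ r ≤ R, 0 ≤ θ ≤ γ}` becomes the
rectangle `[log ε, log R] × [0, γ]`, so Cauchy's theorem for rectangles makes the boundary integral
over the annular sector vanish. As `ε → 0` the inner arc contributes `O(ε)`, because `f` is bounded
on the compact sector, and the two radial integrals converge to the integrals over `[0, R]`.
-/

open MeasureTheory Filter Set Complex intervalIntegral Topology Interval

variable {E : Type*} [NormedAddCommGroup E] [NormedSpace ℂ E]

theorem integral_exp_smul_comp_exp (a b : ℝ) (g : ℝ → E) :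
    ∫ x in a..b, Real.exp x • g (Real.exp x) = ∫ t in Real.exp a..Real.exp b, g t :=
  integral_deriv_smul_comp_of_deriv_nonneg Real.continuous_exp.continuousOn
    (fun x _ => Real.hasDerivAt_exp x) (fun x _ => (Real.exp_pos x).le)

def polarRect (r₁ r₂ θ₁ θ₂ : ℝ) : Set ℂ :=
  (fun p : ℝ × ℝ => (p.1 : ℂ) * exp (p.2 * I)) '' Icc r₁ r₂ ×ˢ Icc θ₁ θ₂

section polarRect

variable {r₁ r₁' r₂ θ₁ θ₂ r θ : ℝ}

theorem isCompact_polarRect : IsCompact (polarRect r₁ r₂ θ₁ θ₂) :=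
  (isCompact_Icc.prod isCompact_Icc).image (by fun_prop)

theorem ofReal_mul_exp_mem_polarRect (hr : r ∈ Icc r₁ r₂) (hθ : θ ∈ Icc θ₁ θ₂) :
    (r : ℂ) * exp (θ * I) ∈ polarRect r₁ r₂ θ₁ θ₂ :=
  ⟨(r, θ), ⟨hr, hθ⟩, rfl⟩

theorem polarRect_subset_polarRect_left (h : r₁' ≤ r₁) :
    polarRect r₁ r₂ θ₁ θ₂ ⊆ polarRect r₁' r₂ θ₁ θ₂ :=
  image_mono (prod_mono (Icc_subset_Icc_left h) le_rfl)

theorem exp_mem_polarRect (hr₁ : 0 < r₁) (hr₂ : 0 < r₂) {z : ℂ}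
    (hre : z.re ∈ Icc (Real.log r₁) (Real.log r₂)) (him : z.im ∈ Icc θ₁ θ₂) :
    exp z ∈ polarRect r₁ r₂ θ₁ θ₂ := by
  have hexp : exp z = (Real.exp z.re : ℂ) * exp (z.im * I) := by
    rw [ofReal_exp, ← exp_add, re_add_im]
  rw [hexp]
  refine ofReal_mul_exp_mem_polarRect ⟨?_, ?_⟩ him
  · simpa [Real.exp_log hr₁] using Real.exp_le_exp.2 hre.1
  · simpa [Real.exp_log hr₂] using Real.exp_le_exp.2 hre.2

end polarRect

/-- The counterclockwise contour integral of `f` over the boundary of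
`polarRect r₁ r₂ θ₁ θ₂ = {r e^{iθ} : r ∈ [r₁, r₂], θ ∈ [θ₁, θ₂]}`. -/
noncomputable def polarRectBoundaryIntegral (f : ℂ → E) (r₁ r₂ θ₁ θ₂ : ℝ) : E :=
  exp (θ₁ * I) • (∫ t in r₁..r₂, f (t * exp (θ₁ * I)))
    - exp (θ₂ * I) • (∫ t in r₁..r₂, f (t * exp (θ₂ * I)))
    + (I * r₂) • (∫ θ in θ₁..θ₂, exp (θ * I) • f (r₂ * exp (θ * I)))
    - (I * r₁) • (∫ θ in θ₁..θ₂, exp (θ * I) • f (r₁ * exp (θ * I)))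

/-- `exp` maps the rectangle `[log r₁, log r₂] × [θ₁, θ₂]` onto the polar rectangle, so this is
Cauchy's theorem for a rectangle applied to `w ↦ exp w • f (exp w)`. -/
theorem polarRectBoundaryIntegral_eq_zero {f : ℂ → E} {r₁ r₂ θ₁ θ₂ : ℝ} (hr₁ : 0 < r₁)
    (hr : r₁ ≤ r₂) (hθ : θ₁ ≤ θ₂) (hf : DifferentiableOn ℂ f (polarRect r₁ r₂ θ₁ θ₂)) :
    polarRectBoundaryIntegral f r₁ r₂ θ₁ θ₂ = 0 := by
  have hr₂ : 0 < r₂ := hr₁.trans_le hr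
  have hlog : Real.log r₁ ≤ Real.log r₂ := Real.log_le_log hr₁ hr
  set g : ℂ → E := fun w => exp w • f (exp w)
  have hg : DifferentiableOn ℂ g ([[Real.log r₁, Real.log r₂]] ×ℂ [[θ₁, θ₂]]) := by
    refine differentiable_exp.differentiableOn.smul
      (hf.comp differentiable_exp.differentiableOn fun z hz => ?_)
    rw [mem_reProdIm, uIcc_of_le hlog, uIcc_of_le hθ] at hz
    exact exp_mem_polarRect hr₁ hr₂ hz.1 hz.2
  have hrect := integral_boundary_rect_eq_zero_of_differentiableOn g
    ⟨Real.log r₁, θ₁⟩ ⟨Real.log r₂, θ₂⟩ hg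
  have hside (θ : ℝ) : (∫ x in Real.log r₁..Real.log r₂, g (x + θ * I))
      = exp (θ * I) • ∫ t in r₁..r₂, f (t * exp (θ * I)) := by
    rw [← intervalIntegral.integral_smul, ← Real.exp_log hr₁, ← Real.exp_log hr₂,
      ← integral_exp_smul_comp_exp, Real.exp_log hr₁, Real.exp_log hr₂]
    refine integral_congr fun x _ => ?_
    simp only [g, exp_add, ← ofReal_exp, mul_smul, Complex.coe_smul]
  have harc {r : ℝ} (hr : 0 < r) : (∫ θ in θ₁..θ₂, g (Real.log r + θ * I))
      = (r : ℂ) • ∫ θ in θ₁..θ₂, exp (θ * I) • f (r * exp (θ * I)) := by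
    rw [← intervalIntegral.integral_smul]
    refine integral_congr fun θ _ => ?_
    simp only [g, exp_add, ← ofReal_exp, Real.exp_log hr, smul_smul]
  simp only [hside, harc hr₁, harc hr₂, smul_smul] at hrect
  simpa [polarRectBoundaryIntegral] using hrect

theorem tendsto_polarRectBoundaryIntegral_nhdsGT_zero {f : ℂ → E} {R θ₁ θ₂ : ℝ} (hR : 0 < R)
    (hθ : θ₁ ≤ θ₂) (hf : ContinuousOn f (polarRect 0 R θ₁ θ₂)) :
    Tendsto (fun r => polarRectBoundaryIntegral f r R θ₁ θ₂) (𝓝[>] 0)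
      (𝓝 (polarRectBoundaryIntegral f 0 R θ₁ θ₂)) := by
  have hray {θ : ℝ} (hθ : θ ∈ Icc θ₁ θ₂) : Tendsto (fun r => ∫ t in r..R, f (t * exp (θ * I)))
      (𝓝[>] 0) (𝓝 (∫ t in (0 : ℝ)..R, f (t * exp (θ * I)))) := by
    have hcont : ContinuousOn (fun t : ℝ => f (t * exp (θ * I))) [[0, R]] :=
      hf.comp (by fun_prop) fun t ht =>
        ofReal_mul_exp_mem_polarRect (uIcc_of_le hR.le ▸ ht) hθ
    refine ((continuousOn_primitive_interval_left hcont.integrableOn_uIcc) 0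
      left_mem_uIcc).mono_of_mem_nhdsWithin ?_ |>.tendsto
    rw [uIcc_of_le hR.le]
    exact Icc_mem_nhdsGT hR
  obtain ⟨M, hM⟩ := isCompact_polarRect.exists_bound_of_continuousOn hf
  have harc : Tendsto (fun r : ℝ => (I * r) • ∫ θ in θ₁..θ₂, exp (θ * I) • f (r * exp (θ * I)))
      (𝓝[>] 0) (𝓝 0) := by
    refine Tendsto.zero_smul_isBoundedUnder_le ?_
      (isBoundedUnder_of_eventually_le (a := M * |θ₂ - θ₁|) ?_)
    · have : Tendsto (fun r : ℝ => I * r) (𝓝 0) (𝓝 (I * (0 : ℝ))) :=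
        (continuous_const.mul continuous_ofReal).tendsto 0
      simpa using this.mono_left nhdsWithin_le_nhds
    · filter_upwards [Icc_mem_nhdsGT hR] with r hr
      refine norm_integral_le_of_norm_le_const fun θ hθ' => ?_
      rw [norm_smul, norm_exp_ofReal_mul_I, one_mul]
      exact hM _ (ofReal_mul_exp_mem_polarRect hr (Ioc_subset_Icc_self (uIoc_of_le hθ ▸ hθ')))
  have hlim := ((((hray ⟨le_rfl, hθ⟩).const_smul (exp (θ₁ * I))).sub
    ((hray ⟨hθ, le_rfl⟩).const_smul (exp (θ₂ * I)))).add
    (tendsto_const_nhds (x := (I * R) • ∫ θ in θ₁..θ₂, exp (θ * I) • f (R * exp (θ * I))))).sub harc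
  simpa [polarRectBoundaryIntegral] using hlim

theorem polarRectBoundaryIntegral_zero_eq_zero {f : ℂ → E} {R θ₁ θ₂ : ℝ} (hR : 0 < R)
    (hθ : θ₁ ≤ θ₂) (hf : DifferentiableOn ℂ f (polarRect 0 R θ₁ θ₂)) :
    polarRectBoundaryIntegral f 0 R θ₁ θ₂ = 0 := by
  refine tendsto_nhds_unique (tendsto_polarRectBoundaryIntegral_nhdsGT_zero hR hθ hf.continuousOn)
    (tendsto_const_nhds.congr' ?_)
  filter_upwards [Ioc_mem_nhdsGT hR] with r hr
  exact (polarRectBoundaryIntegral_eq_zero hr.1 hr.2 hθ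
    (hf.mono (polarRect_subset_polarRect_left hr.1.le))).symm

theorem sector_contour_decomposition_general (γ R : ℝ) (hγ0 : 0 < γ)
    (hR : 0 < R) (f : ℂ → ℂ)
    (hf : ∃ U : Set ℂ, IsOpen U ∧
      {z : ℂ | ∃ r θ : ℝ, 0 ≤ r ∧ r ≤ R ∧ 0 ≤ θ ∧ θ ≤ γ ∧
        z = (r : ℂ) * Complex.exp ((θ : ℂ) * Complex.I)} ⊆ U ∧
      DifferentiableOn ℂ f U) :
    ∫ t in (0:ℝ)..R, f t =
      Complex.exp ((γ : ℂ) * Complex.I) *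
        (∫ t in (0:ℝ)..R, f ((t : ℂ) * Complex.exp ((γ : ℂ) * Complex.I)))
      - Complex.I * (R : ℂ) *
        ∫ θ in (0:ℝ)..γ,
          Complex.exp ((θ : ℂ) * Complex.I) * f ((R : ℂ) * Complex.exp ((θ : ℂ) * Complex.I)) := by
  obtain ⟨U, -, hSU, hfU⟩ := hf
  have hsector : polarRect 0 R 0 γ ⊆ U := by
    rintro _ ⟨⟨r, θ⟩, ⟨⟨hr₀, hrR⟩, hθ₀, hθγ⟩, rfl⟩
    exact hSU ⟨r, θ, hr₀, hrR, hθ₀, hθγ, rfl⟩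
  have hboundary := polarRectBoundaryIntegral_zero_eq_zero hR hγ0.le (hfU.mono hsector)
  simp only [polarRectBoundaryIntegral, smul_eq_mul, ofReal_zero, zero_mul, exp_zero, mul_one,
    one_mul, mul_zero, intervalIntegral.integral_mul_const, sub_zero] at hboundary
  linear_combination hboundary

/-- **Contour decomposition over a closed sector.**
For `0 < γ < π/2`, `R > 0` and `f` complex differentiable on an open set containing the
closed sector `S(R,γ) = {r·e^{iθ} : 0 ≤ r ≤ R, 0 ≤ θ ≤ γ}`, the integral of `f` over the
real segment `[0,R]` equals the integral over the rotated segment plus the (negatively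
oriented) arc contribution. -/
theorem sector_contour_decomposition (γ R : ℝ) (hγ0 : 0 < γ) (hγ : γ < Real.pi / 2)
    (hR : 0 < R) (f : ℂ → ℂ)
    (hf : ∃ U : Set ℂ, IsOpen U ∧
      {z : ℂ | ∃ r θ : ℝ, 0 ≤ r ∧ r ≤ R ∧ 0 ≤ θ ∧ θ ≤ γ ∧
        z = (r : ℂ) * Complex.exp ((θ : ℂ) * Complex.I)} ⊆ U ∧
      DifferentiableOn ℂ f U) :
    ∫ t in (0:ℝ)..R, f t =
      Complex.exp ((γ : ℂ) * Complex.I) *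
        (∫ t in (0:ℝ)..R, f ((t : ℂ) * Complex.exp ((γ : ℂ) * Complex.I)))
      - Complex.I * (R : ℂ) *
        ∫ θ in (0:ℝ)..γ,
          Complex.exp ((θ : ℂ) * Complex.I) * f ((R : ℂ) * Complex.exp ((θ : ℂ) * Complex.I)) :=
  sector_contour_decomposition_general γ R hγ0 hR f hf
end

section
/- Let 0 < γ < π/2 and let f : ℂ → ℂ be complex differentiable on an open set containing the infinite closed sector {r·e^{iθ} : r ≥ 0, 0 ≤ θ ≤ γ}. Assume that R · sup{|f(R·e^{iθ})| : θ ∈ [0,γ]} tends to 0 as R → ∞, and that t ↦ f(t) and t ↦ f(t·e^{iγ}) are both Lebesgue integrable on [0,∞). Then ∫₀^∞ f(t) dt = e^{iγ} · ∫₀^∞ f(t·e^{iγ}) dt. -/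
/-!
Substituting `z = exp w` maps the horizontal strip `0 ≤ Im w ≤ γ` into the sector minus the
origin, its two edges onto the two rays, and turns `f z dz` into `g w dw` with
`g w = exp w • f (exp w)`. Cauchy–Goursat on the rectangles `[-b, b] × [0, γ]` equates the
integrals of `g` along the two edges once the vertical sides vanish as `b → ±∞`: at `+∞` because
`‖g w‖ ≤ R · sup_θ ‖f (R e^{iθ})‖` with `R = e^{Re w}`, at `-∞` because `f` is bounded near `0`.
-/

open MeasureTheory Filter

open Complex Set Topology Interval

theorem exp_ofReal_add_mul_I (x y : ℝ) : exp (x + y * I) = Real.exp x * exp (y * I) := by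
  rw [exp_add, ofReal_exp]

theorem exp_eq_exp_re_mul_exp_im_mul_I (w : ℂ) : exp w = Real.exp w.re * exp (w.im * I) := by
  rw [← exp_ofReal_add_mul_I, re_add_im]

section ExpSubstitution

variable {E : Type*} [NormedAddCommGroup E]

theorem integral_Ioi_eq_integral_exp_smul_comp_exp [NormedSpace ℝ E] (h : ℝ → E) :
    ∫ t in Ioi 0, h t = ∫ x, Real.exp x • h (Real.exp x) := by
  have := integral_image_eq_integral_abs_deriv_smul MeasurableSet.univ
    (fun x _ ↦ (Real.hasDerivAt_exp x).hasDerivWithinAt) Real.exp_injective.injOn h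
  rw [image_univ, Real.range_exp, setIntegral_univ] at this
  simpa only [Real.abs_exp] using this

theorem integrable_exp_smul_comp_exp [NormedSpace ℝ E] {h : ℝ → E}
    (hh : IntegrableOn h (Ioi 0)) : Integrable fun x ↦ Real.exp x • h (Real.exp x) := by
  have := integrableOn_image_iff_integrableOn_abs_deriv_smul MeasurableSet.univ
    (fun x _ ↦ (Real.hasDerivAt_exp x).hasDerivWithinAt) Real.exp_injective.injOn h
  rw [image_univ, Real.range_exp, integrableOn_univ] at this
  simpa only [Real.abs_exp] using this.mp hh

variable [NormedSpace ℂ E]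

theorem exp_add_mul_I_smul_comp_exp (f : ℂ → E) (c x : ℝ) :
    exp (x + c * I) • f (exp (x + c * I)) =
      exp (c * I) • Real.exp x • f (Real.exp x * exp (c * I)) := by
  rw [exp_ofReal_add_mul_I, mul_smul, smul_comm, coe_smul]

theorem integrable_exp_add_mul_I_smul_comp_exp {f : ℂ → E} {c : ℝ}
    (hf : IntegrableOn (fun t : ℝ ↦ f (t * exp (c * I))) (Ioi 0)) :
    Integrable fun x : ℝ ↦ exp (x + c * I) • f (exp (x + c * I)) := by
  simpa only [exp_add_mul_I_smul_comp_exp, Pi.smul_def] using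
    (integrable_exp_smul_comp_exp hf).smul (exp (c * I))

theorem integral_exp_add_mul_I_smul_comp_exp (f : ℂ → E) (c : ℝ) :
    ∫ x : ℝ, exp (x + c * I) • f (exp (x + c * I)) =
      exp (c * I) • ∫ t in Ioi (0 : ℝ), f (t * exp (c * I)) := by
  simp only [exp_add_mul_I_smul_comp_exp, integral_smul,
    integral_Ioi_eq_integral_exp_smul_comp_exp fun t : ℝ ↦ f (t * exp (c * I))]

end ExpSubstitution

section Strip

variable {E : Type*} [NormedAddCommGroup E] [NormedSpace ℂ E]

theorem tendsto_integral_add_mul_I_of_tendsto_comap_re {l : Filter ℝ} {g : ℂ → E} {c : ℝ}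
    (hg : Tendsto g (comap re l ⊓ 𝓟 (im ⁻¹' [[0, c]])) (𝓝 0)) :
    Tendsto (fun b : ℝ ↦ ∫ y in 0..c, g (b + y * I)) l (𝓝 0) := by
  rw [Metric.tendsto_nhds] at hg ⊢
  intro ε hε
  have hε' : 0 < ε / (|c| + 1) := by positivity
  filter_upwards [eventually_comap.mp (eventually_inf_principal.mp (hg _ hε'))] with b hb
  have hbound : ∀ y ∈ Ι 0 c, ‖g (b + y * I)‖ ≤ ε / (|c| + 1) := fun y hy ↦ by
    simpa using (hb (b + y * I) (by simp) (by simpa using uIoc_subset_uIcc hy)).le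
  calc dist (∫ y in 0..c, g (b + y * I)) 0
      ≤ ε / (|c| + 1) * |c - 0| := by
        rw [dist_zero_right]; exact intervalIntegral.norm_integral_le_of_norm_le_const hbound
    _ < ε := by
        rw [sub_zero, div_mul_eq_mul_div, div_lt_iff₀ (by positivity)]
        nlinarith [abs_nonneg c]

theorem integral_eq_integral_add_mul_I_of_differentiableOn_strip {g : ℂ → E} {c : ℝ}
    (hd : DifferentiableOn ℂ g (im ⁻¹' [[0, c]]))
    (h₀ : Integrable fun x : ℝ ↦ g x) (h₁ : Integrable fun x : ℝ ↦ g (x + c * I))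
    (htop : Tendsto g (comap re atTop ⊓ 𝓟 (im ⁻¹' [[0, c]])) (𝓝 0))
    (hbot : Tendsto g (comap re atBot ⊓ 𝓟 (im ⁻¹' [[0, c]])) (𝓝 0)) :
    ∫ x : ℝ, g x = ∫ x : ℝ, g (x + c * I) := by
  set V : ℝ → E := fun b ↦ ∫ y in 0..c, g (b + y * I)
  have hrect (b : ℝ) : (∫ x in -b..b, g x) - ∫ x in -b..b, g (x + c * I) =
      I • V (-b) - I • V b := by
    have := integral_boundary_rect_eq_zero_of_differentiableOn g (-b : ℝ) (b + c * I)
      (hd.mono fun w hw ↦ by simpa using hw.2)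
    simp only [add_re, add_im, ofReal_re, ofReal_im, mul_I_re, mul_I_im, neg_zero, zero_add,
      add_zero, ofReal_zero, zero_mul] at this
    exact eq_sub_of_add_eq (sub_eq_zero.mp this)
  have hlim := (intervalIntegral_tendsto_integral h₀ tendsto_neg_atTop_atBot tendsto_id).sub
    (intervalIntegral_tendsto_integral h₁ tendsto_neg_atTop_atBot tendsto_id)
  have hsides : Tendsto (fun b ↦ I • V (-b) - I • V b) atTop (𝓝 0) := by
    have hVtop : Tendsto V atTop (𝓝 0) := tendsto_integral_add_mul_I_of_tendsto_comap_re htop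
    have hVbot : Tendsto V atBot (𝓝 0) := tendsto_integral_add_mul_I_of_tendsto_comap_re hbot
    simpa only [smul_zero, sub_zero, Function.comp_apply] using
      ((hVbot.comp tendsto_neg_atTop_atBot).const_smul I).sub (hVtop.const_smul I)
  exact sub_eq_zero.mp (tendsto_nhds_unique (hlim.congr hrect) hsides)

end Strip

section Sector

variable {E : Type*} [NormedAddCommGroup E]

def closedSector (γ : ℝ) : Set ℂ :=
  {z : ℂ | ∃ r θ : ℝ, 0 ≤ r ∧ 0 ≤ θ ∧ θ ≤ γ ∧ z = (r : ℂ) * exp ((θ : ℂ) * I)}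

theorem exp_mem_closedSector {γ : ℝ} {w : ℂ} (hw : w ∈ im ⁻¹' Icc 0 γ) :
    exp w ∈ closedSector γ :=
  ⟨Real.exp w.re, w.im, (Real.exp_pos _).le, hw.1, hw.2, exp_eq_exp_re_mul_exp_im_mul_I w⟩

theorem norm_le_iSup_norm_comp_mul_exp_mul_I {f : ℂ → E} {γ R θ : ℝ}
    (hf : ContinuousOn f (closedSector γ)) (hR : 0 ≤ R) (hθ : θ ∈ Icc 0 γ) :
    ‖f (R * exp (θ * I))‖ ≤ ⨆ θ : Icc (0 : ℝ) γ, ‖f (R * exp ((θ : ℝ) * I))‖ := by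
  have hcont : Continuous fun θ : Icc (0 : ℝ) γ ↦ ‖f (R * exp ((θ : ℝ) * I))‖ :=
    (hf.comp_continuous (by fun_prop) fun θ : Icc (0 : ℝ) γ ↦ ⟨R, θ, hR, θ.2.1, θ.2.2, rfl⟩).norm
  exact le_ciSup (isCompact_range hcont).bddAbove (⟨θ, hθ⟩ : Icc (0 : ℝ) γ)

variable [NormedSpace ℂ E]

theorem tendsto_exp_smul_comp_exp_comap_re_atTop {f : ℂ → E} {γ : ℝ}
    (hf : ContinuousOn f (closedSector γ))
    (hdecay : Tendsto (fun R : ℝ ↦ R * ⨆ θ : Icc (0 : ℝ) γ, ‖f (R * exp ((θ : ℝ) * I))‖)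
      atTop (𝓝 0)) :
    Tendsto (fun w ↦ exp w • f (exp w)) (comap re atTop ⊓ 𝓟 (im ⁻¹' Icc 0 γ)) (𝓝 0) := by
  refine squeeze_zero_norm' ?_
    ((hdecay.comp (Real.tendsto_exp_atTop.comp tendsto_comap)).mono_left inf_le_left)
  filter_upwards [mem_inf_of_right (mem_principal_self _)] with w hw
  rw [norm_smul, norm_exp, exp_eq_exp_re_mul_exp_im_mul_I]
  exact mul_le_mul_of_nonneg_left
    (norm_le_iSup_norm_comp_mul_exp_mul_I hf (Real.exp_pos _).le hw) (Real.exp_pos _).le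

theorem tendsto_exp_smul_comp_exp_comap_re_atBot {f : ℂ → E} (hf : ContinuousAt f 0) :
    Tendsto (fun w ↦ exp w • f (exp w)) (comap re atBot) (𝓝 0) := by
  simpa using tendsto_exp_comap_re_atBot.smul (hf.tendsto.comp tendsto_exp_comap_re_atBot)

end Sector

theorem halfline_contour_rotation_general (γ : ℝ) (hγ0 : 0 < γ)
    (f : ℂ → ℂ)
    (hf : ∃ U : Set ℂ, IsOpen U ∧
      {z : ℂ | ∃ r θ : ℝ, 0 ≤ r ∧ 0 ≤ θ ∧ θ ≤ γ ∧
        z = (r : ℂ) * Complex.exp ((θ : ℂ) * Complex.I)} ⊆ U ∧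
      DifferentiableOn ℂ f U)
    (hdecay : Tendsto
      (fun R : ℝ => R * ⨆ θ : Set.Icc (0:ℝ) γ,
        ‖f ((R : ℂ) * Complex.exp (((θ : ℝ) : ℂ) * Complex.I))‖)
      atTop (nhds 0))
    (hint₁ : IntegrableOn (fun t : ℝ => f (t : ℂ)) (Set.Ici 0))
    (hint₂ : IntegrableOn
      (fun t : ℝ => f ((t : ℂ) * Complex.exp ((γ : ℂ) * Complex.I))) (Set.Ici 0)) :
    ∫ t in Set.Ioi (0:ℝ), f (t : ℂ) =
      Complex.exp ((γ : ℂ) * Complex.I) *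
        ∫ t in Set.Ioi (0:ℝ), f ((t : ℂ) * Complex.exp ((γ : ℂ) * Complex.I)) := by
  obtain ⟨U, hUo, hSU, hfU⟩ := hf
  have hstrip : im ⁻¹' [[0, γ]] = im ⁻¹' Icc 0 γ := by rw [uIcc_of_le hγ0.le]
  have hdiff : DifferentiableOn ℂ (fun w ↦ exp w • f (exp w)) (im ⁻¹' [[0, γ]]) :=
    hstrip ▸ differentiable_exp.differentiableOn.smul
      (hfU.comp differentiable_exp.differentiableOn fun w hw ↦ hSU (exp_mem_closedSector hw))
  have hf0 : ContinuousAt f 0 :=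
    hfU.continuousOn.continuousAt (hUo.mem_nhds (hSU ⟨0, 0, le_rfl, le_rfl, hγ0.le, by simp⟩))
  have hint₀ : IntegrableOn (fun t : ℝ ↦ f (t * exp ((0 : ℝ) * I))) (Ioi 0) := by
    simpa using hint₁.mono_set Ioi_subset_Ici_self
  have hshift := integral_eq_integral_add_mul_I_of_differentiableOn_strip hdiff
    (by simpa using integrable_exp_add_mul_I_smul_comp_exp hint₀)
    (integrable_exp_add_mul_I_smul_comp_exp (hint₂.mono_set Ioi_subset_Ici_self))
    (hstrip ▸ tendsto_exp_smul_comp_exp_comap_re_atTop (hfU.continuousOn.mono hSU) hdecay)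
    ((tendsto_exp_smul_comp_exp_comap_re_atBot hf0).mono_left inf_le_left)
  rw [← smul_eq_mul, ← integral_exp_add_mul_I_smul_comp_exp, ← hshift]
  simpa using (integral_exp_add_mul_I_smul_comp_exp f 0).symm

/-- **Rotation of the half-line integration contour into the complex plane.**
For `0 < γ < π/2` and `f` complex differentiable on an open set containing the infinite
closed sector `{r·e^{iθ} : r ≥ 0, 0 ≤ θ ≤ γ}`, if `R · sup_{θ ∈ [0,γ]} |f(R·e^{iθ})| → 0`
as `R → ∞` and both `t ↦ f(t)` and `t ↦ f(t·e^{iγ})` are integrable on `[0,∞)`, then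
`∫₀^∞ f(t) dt = e^{iγ} · ∫₀^∞ f(t·e^{iγ}) dt`. -/
theorem halfline_contour_rotation (γ : ℝ) (hγ0 : 0 < γ) (hγ : γ < Real.pi / 2)
    (f : ℂ → ℂ)
    (hf : ∃ U : Set ℂ, IsOpen U ∧
      {z : ℂ | ∃ r θ : ℝ, 0 ≤ r ∧ 0 ≤ θ ∧ θ ≤ γ ∧
        z = (r : ℂ) * Complex.exp ((θ : ℂ) * Complex.I)} ⊆ U ∧
      DifferentiableOn ℂ f U)
    (hdecay : Tendsto
      (fun R : ℝ => R * ⨆ θ : Set.Icc (0:ℝ) γ,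
        ‖f ((R : ℂ) * Complex.exp (((θ : ℝ) : ℂ) * Complex.I))‖)
      atTop (nhds 0))
    (hint₁ : IntegrableOn (fun t : ℝ => f (t : ℂ)) (Set.Ici 0))
    (hint₂ : IntegrableOn
      (fun t : ℝ => f ((t : ℂ) * Complex.exp ((γ : ℂ) * Complex.I))) (Set.Ici 0)) :
    ∫ t in Set.Ioi (0:ℝ), f (t : ℂ) =
      Complex.exp ((γ : ℂ) * Complex.I) *
        ∫ t in Set.Ioi (0:ℝ), f ((t : ℂ) * Complex.exp ((γ : ℂ) * Complex.I)) :=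
  halfline_contour_rotation_general γ hγ0 f hf hdecay hint₁ hint₂
end

section
/- Let k ∈ ℝ and let g : ℝ³ → ℂ be continuous with compact support. Define u(x) = ∫_{ℝ³} (e^{ik‖x−y‖} / (4π‖x−y‖)) · g(y) dy. Then for every unit vector α ∈ ℝ³, the limit as ρ → ∞ of 4π·ρ·e^{−ikρ} · u(ρ·α) equals F(α) := ∫_{ℝ³} e^{−ik⟪α,y⟫} · g(y) dy. -/
/-!
Multiplied by `4πρ e^{-ikρ}`, the integrand of `u(ρα)` becomes
`(ρ / ‖ρα - y‖) · e^{ik(‖ρα - y‖ - ρ)} · g(y)`. The map `s ↦ ‖α - s y‖` has derivative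
`-⟪α, y⟫` at `s = 0`, so the phase `‖ρα - y‖ - ρ = ρ (‖α - ρ⁻¹ y‖ - ‖α‖)` tends to `-⟪α, y⟫`,
while the amplitude `ρ / ‖ρα - y‖` tends to `1` and is at most `2` once `ρ ≥ 2‖y‖`.
Since `g` has compact support, dominated convergence gives the limit.
-/

open Filter MeasureTheory
open scoped Topology RealInnerProductSpace

section UnitVector

variable {E : Type*} [NormedAddCommGroup E] [InnerProductSpace ℝ E] {α : E}

theorem hasDerivAt_norm_sub_smul (hα : ‖α‖ = 1) (y : E) :
    HasDerivAt (fun s : ℝ => ‖α - s • y‖) (-⟪α, y⟫) 0 := by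
  have h := (((hasDerivAt_id (0 : ℝ)).smul_const y).const_sub α).norm_sq.sqrt (by simp [hα])
  convert h using 1 <;> simp [hα, inner_neg_right]
  ring

theorem tendsto_norm_smul_sub_sub_atTop (hα : ‖α‖ = 1) (y : E) :
    Tendsto (fun ρ : ℝ => ‖ρ • α - y‖ - ρ) atTop (𝓝 (-⟪α, y⟫)) := by
  refine ((hasDerivAt_norm_sub_smul hα y).tendsto_slope_zero_right.comp
    tendsto_inv_atTop_nhdsGT_zero).congr' ?_
  filter_upwards [eventually_gt_atTop 0] with ρ hρ
  have : ρ • α - y = ρ • (α - ρ⁻¹ • y) := by rw [smul_sub, smul_inv_smul₀ hρ.ne']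
  simp [this, norm_smul, abs_of_pos hρ, hα, mul_sub]

theorem tendsto_norm_smul_sub_div_atTop (hα : ‖α‖ = 1) (y : E) :
    Tendsto (fun ρ : ℝ => ‖ρ • α - y‖ / ρ) atTop (𝓝 1) := by
  have h := ((tendsto_norm_smul_sub_sub_atTop hα y).div_atTop tendsto_id).const_add 1
  rw [add_zero] at h
  refine h.congr' ?_
  filter_upwards [eventually_gt_atTop 0] with ρ hρ
  dsimp only [id]
  field_simp
  ring

theorem div_norm_smul_sub_le_two (hα : ‖α‖ = 1) {y : E} {ρ : ℝ} (hρ : 2 * ‖y‖ ≤ ρ) :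
    ρ / ‖ρ • α - y‖ ≤ 2 := by
  have hρ0 : 0 ≤ ρ := by linarith [norm_nonneg y]
  have : ρ - ‖y‖ ≤ ‖ρ • α - y‖ := by
    simpa [norm_smul, hα, abs_of_nonneg hρ0] using norm_sub_norm_le (ρ • α) y
  exact div_le_of_le_mul₀ (norm_nonneg _) zero_le_two (by linarith)

theorem tendsto_div_norm_smul_sub_mul_exp_atTop (hα : ‖α‖ = 1) (k : ℝ) (y : E) :
    Tendsto (fun ρ : ℝ => ((ρ / ‖ρ • α - y‖ : ℝ) : ℂ) *
        Complex.exp ((k * (‖ρ • α - y‖ - ρ) : ℝ) * Complex.I))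
      atTop (𝓝 (Complex.exp (-(Complex.I * k * (⟪α, y⟫ : ℝ))))) := by
  have hratio : Tendsto (fun ρ : ℝ => ρ / ‖ρ • α - y‖) atTop (𝓝 1) := by
    simpa using (tendsto_norm_smul_sub_div_atTop hα y).inv₀ one_ne_zero
  have hphase := ((tendsto_norm_smul_sub_sub_atTop hα y).const_mul k).ofReal.mul_const
    Complex.I |>.cexp
  convert hratio.ofReal.mul hphase using 2
  push_cast
  ring_nf

end UnitVector

/-- At `d = 0` both sides vanish, by the convention `x / 0 = 0`. -/
theorem helmholtz_farfield_factor (k ρ d : ℝ) :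
    4 * (Real.pi : ℂ) * ρ * Complex.exp (-(Complex.I * k * ρ)) *
        (Complex.exp (Complex.I * k * d) / (4 * Real.pi * d)) =
      ((ρ / d : ℝ) : ℂ) * Complex.exp ((k * (d - ρ) : ℝ) * Complex.I) := by
  rcases eq_or_ne d 0 with rfl | hd
  · simp
  have : Complex.exp ((k * (d - ρ) : ℝ) * Complex.I) =
      Complex.exp (Complex.I * k * d) * Complex.exp (-(Complex.I * k * ρ)) := by
    rw [← Complex.exp_add]
    push_cast
    ring_nf
  rw [this]
  push_cast
  field_simp

theorem tendsto_integral_mul_of_bounded_on_support {ι X : Type*} [MeasurableSpace X]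
    {μ : Measure X} {l : Filter ι} [l.IsCountablyGenerated] {K : ι → X → ℂ} {L g : X → ℂ}
    (C : ℝ) (hg : Integrable g μ) (hKm : ∀ᶠ i in l, AEStronglyMeasurable (K i) μ)
    (hKC : ∀ᶠ i in l, ∀ x ∈ Function.support g, ‖K i x‖ ≤ C)
    (hKL : ∀ᵐ x ∂μ, Tendsto (K · x) l (𝓝 (L x))) :
    Tendsto (fun i => ∫ x, K i x * g x ∂μ) l (𝓝 (∫ x, L x * g x ∂μ)) := by
  refine tendsto_integral_filter_of_dominated_convergence (fun x => C * ‖g x‖)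
    ?_ ?_ (hg.norm.const_mul C) ?_
  · filter_upwards [hKm] with i hi using hi.mul hg.aestronglyMeasurable
  · filter_upwards [hKC] with i hi
    refine ae_of_all _ fun x => ?_
    by_cases hx : g x = 0
    · simp [hx]
    · rw [norm_mul]
      exact mul_le_mul_of_nonneg_right (hi x hx) (norm_nonneg _)
  · filter_upwards [hKL] with x hx using hx.mul_const _

/-- **Far field map of the 3D Helmholtz volume potential.**
Let `g : ℝ³ → ℂ` be continuous with compact support and let
`u(x) = ∫ (e^{ik‖x−y‖}/(4π‖x−y‖))·g(y) dy` be the outgoing volume potential.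
Then for every unit vector `α`, `4π·ρ·e^{−ikρ}·u(ρ·α) → F(α) = ∫ e^{−ik⟪α,y⟫}·g(y) dy`
as `ρ → ∞`. -/
theorem farfield_map_of_volume_potential (k : ℝ) (g : EuclideanSpace ℝ (Fin 3) → ℂ)
    (hg : Continuous g) (hgsupp : HasCompactSupport g)
    (u : EuclideanSpace ℝ (Fin 3) → ℂ)
    (hu : ∀ x : EuclideanSpace ℝ (Fin 3),
      u x = ∫ y : EuclideanSpace ℝ (Fin 3),
        (Complex.exp (Complex.I * (k : ℂ) * (‖x - y‖ : ℂ)) /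
          (4 * (Real.pi : ℂ) * (‖x - y‖ : ℂ))) * g y)
    (α : EuclideanSpace ℝ (Fin 3)) (hα : ‖α‖ = 1) :
    Tendsto
      (fun ρ : ℝ =>
        (4 * (Real.pi : ℂ) * (ρ : ℂ)) * Complex.exp (-(Complex.I * (k : ℂ) * (ρ : ℂ))) *
          u (ρ • α))
      atTop
      (nhds (∫ y : EuclideanSpace ℝ (Fin 3),
        Complex.exp (-(Complex.I * (k : ℂ) * ((inner ℝ α y : ℝ) : ℂ))) * g y)) := by
  obtain ⟨R, hR⟩ := hgsupp.isBounded.subset_closedBall 0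
  have hu_rescaled (ρ : ℝ) :
      4 * (Real.pi : ℂ) * ρ * Complex.exp (-(Complex.I * k * ρ)) * u (ρ • α) =
        ∫ y, ((ρ / ‖ρ • α - y‖ : ℝ) : ℂ) *
          Complex.exp ((k * (‖ρ • α - y‖ - ρ) : ℝ) * Complex.I) * g y := by
    simp_rw [hu, ← integral_const_mul, ← mul_assoc, helmholtz_farfield_factor]
  simp_rw [hu_rescaled]
  refine tendsto_integral_mul_of_bounded_on_support 2 (hg.integrable_of_hasCompactSupport hgsupp)
    (Eventually.of_forall fun ρ => by fun_prop) ?_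
    (ae_of_all _ fun y => tendsto_div_norm_smul_sub_mul_exp_atTop hα k y)
  filter_upwards [eventually_ge_atTop (2 * R)] with ρ hρ y hy
  have hyR : ‖y‖ ≤ R := by simpa using hR (subset_tsupport g hy)
  have hρ0 : 0 ≤ ρ := by linarith [norm_nonneg y]
  rw [norm_mul, Complex.norm_exp_ofReal_mul_I, mul_one, Complex.norm_real,
    Real.norm_of_nonneg (by positivity)]
  exact div_norm_smul_sub_le_two hα (by linarith)
end

section
/- Let n ≥ 1, let L and K be n×n complex matrices, let h > 0 be real, let φ ∈ ℝ, and let u, b ∈ ℂⁿ. Then u satisfies the Complex Stretched Grid system −((1/(e^{iφ}h²))·L + K)·u = b if and only if u satisfies the Complex Shifted Laplacian system −((1/h²)·L + e^{iφ}·K)·u = e^{iφ}·b. -/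
theorem smul_neg_one_div_mul_smul_add {𝕜 M : Type*} [Field 𝕜] [AddCommGroup M] [Module 𝕜 M]
    {c : 𝕜} (hc : c ≠ 0) (s : 𝕜) (x y : M) :
    c • -((1 / (c * s)) • x + y) = -((1 / s) • x + c • y) := by
  rw [smul_neg, smul_add, smul_smul, mul_one_div, div_mul_cancel_left₀ hc, one_div]

theorem Matrix.mulVec_eq_iff_smul_mulVec_eq_smul {𝕜 m n : Type*} [Field 𝕜] [Fintype n]
    {c : 𝕜} (hc : c ≠ 0) (A : Matrix m n 𝕜) (u : n → 𝕜) (b : m → 𝕜) :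
    A.mulVec u = b ↔ (c • A).mulVec u = c • b := by
  rw [Matrix.smul_mulVec, smul_right_inj hc]

theorem csg_iff_csl_general (n : ℕ) (L K : Matrix (Fin n) (Fin n) ℂ)
    (h : ℝ) (φ : ℝ) (u b : Fin n → ℂ) :
    (-((1 / (Complex.exp ((φ : ℂ) * Complex.I) * (h : ℂ) ^ 2)) • L + K)).mulVec u = b ↔
    (-((1 / (h : ℂ) ^ 2) • L + Complex.exp ((φ : ℂ) * Complex.I) • K)).mulVec u =
      Complex.exp ((φ : ℂ) * Complex.I) • b := by
  have hexp : Complex.exp ((φ : ℂ) * Complex.I) ≠ 0 := Complex.exp_ne_zero _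
  rw [Matrix.mulVec_eq_iff_smul_mulVec_eq_smul hexp, smul_neg_one_div_mul_smul_add hexp]

/-- **Equivalence of the Complex Stretched Grid and Complex Shifted Laplacian systems.**
For `n×n` complex matrices `L`, `K`, real `h > 0`, `φ ∈ ℝ` and vectors `u`, `b`, one has
`−((1/(e^{iφ}h²))·L + K)·u = b` iff `−((1/h²)·L + e^{iφ}·K)·u = e^{iφ}·b`. -/
theorem csg_iff_csl (n : ℕ) (hn : 1 ≤ n) (L K : Matrix (Fin n) (Fin n) ℂ)
    (h : ℝ) (hh : 0 < h) (φ : ℝ) (u b : Fin n → ℂ) :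
    (-((1 / (Complex.exp ((φ : ℂ) * Complex.I) * (h : ℂ) ^ 2)) • L + K)).mulVec u = b ↔
    (-((1 / (h : ℂ) ^ 2) • L + Complex.exp ((φ : ℂ) * Complex.I) • K)).mulVec u =
      Complex.exp ((φ : ℂ) * Complex.I) • b :=
  csg_iff_csl_general n L K h φ u b
end
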